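/- arXiv:1307.0067 — 3 statements merged into one kernel-verified Lean document; each statement's English description precedes it below -/
import Mathlib

section
/- (MaxEJS encoding.) Consider a DMC with finite alphabets 𝒳, 𝒴, capacity C := max_π I(π), a capacity-achieving input distribution π* satisfying D(P_x ‖ Σ_{x'} π*_{x'} P_{x'}) = C for every x with π*_x > 0, and C₁ := max_{x,x'∈𝒳} D(P_x‖P_{x'}). Let M ≥ 2 and let ρ be a probability vector on Ω = {1,…,M} with ρᵢ > 0 for all i. Then: (i) max over all encoding functions γ: Ω → 𝒳 of EJS(ρ, γ) ≥ C; and (ii) for any ρ̃ ∈ (0,1), if max_{i∈Ω} ρᵢ ≥ ρ̃ then max over all encoding functions γ of EJS(ρ, γ) ≥ ρ̃·C₁. -/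
open Finset

/-- Kullback–Leibler divergence (base 2) between two pmfs on a finite set,
with the conventions `0·log₂(a/0) = 0` and `b·log₂(b/0) = +∞` for `b > 0`;
values in `[0,∞]` (formalized in the extended reals). -/
noncomputable def KL {Y : Type*} [Fintype Y] (P Q : Y → ℝ) : EReal :=
  ∑ y, if P y = 0 then (0 : EReal)
       else if Q y = 0 then (⊤ : EReal)
       else ((P y * Real.logb 2 (P y / Q y) : ℝ) : EReal)

/-- Extrinsic Jensen–Shannon divergence (for weight vectors with `ρ i < 1` for all `i`):
`EJS(ρ; P₁,…,P_M) = Σᵢ ρᵢ · D(Pᵢ ‖ Σ_{j≠i} (ρⱼ/(1−ρᵢ)) Pⱼ)`. -/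
noncomputable def EJS {Y : Type*} [Fintype Y] {M : ℕ} (ρ : Fin M → ℝ)
    (P : Fin M → Y → ℝ) : EReal :=
  ∑ i, ((ρ i : ℝ) : EReal) *
    KL (P i) (fun y => ∑ j ∈ univ.erase i, (ρ j / (1 - ρ i)) * P j y)

private lemma ereal_coe_mul_add {c : ℝ} (hc : 0 ≤ c) (x y : EReal) :
    (c : EReal) * (x + y) = (c : EReal) * x + (c : EReal) * y := by
  rcases hc.eq_or_lt with h | hc
  · simp [← h]
  have hc' : (0 : EReal) < (c : EReal) := EReal.coe_pos.2 hc
  induction x using EReal.rec with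
  | bot => simp [EReal.coe_mul_bot_of_pos hc]
  | top =>
    induction y using EReal.rec with
    | bot => simp [EReal.coe_mul_bot_of_pos hc, EReal.coe_mul_top_of_pos hc]
    | coe r =>
      rw [EReal.top_add_coe, EReal.coe_mul_top_of_pos hc, ← EReal.coe_mul,
        EReal.top_add_coe]
    | top => rw [EReal.top_add_top, EReal.coe_mul_top_of_pos hc, EReal.top_add_top]
  | coe r =>
    induction y using EReal.rec with
    | bot => simp [EReal.coe_mul_bot_of_pos hc, ← EReal.coe_mul]
    | coe s => rw [← EReal.coe_add, ← EReal.coe_mul, ← EReal.coe_mul, ← EReal.coe_mul,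
        mul_add, EReal.coe_add]
    | top => rw [EReal.coe_add_top, EReal.coe_mul_top_of_pos hc, ← EReal.coe_mul,
        EReal.coe_add_top]

private lemma ereal_coe_mul_sum {c : ℝ} (hc : 0 ≤ c) {ι : Type*} (s : Finset ι)
    (f : ι → EReal) : (c : EReal) * ∑ i ∈ s, f i = ∑ i ∈ s, (c : EReal) * f i := by
  classical
  induction s using Finset.induction with
  | empty => simp
  | insert _ _ hnm ih =>
    rw [Finset.sum_insert hnm, Finset.sum_insert hnm, ereal_coe_mul_add hc, ih]

private lemma ereal_coe_sum {ι : Type*} (s : Finset ι) (f : ι → ℝ) :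
    ((∑ i ∈ s, f i : ℝ) : EReal) = ∑ i ∈ s, ((f i : ℝ) : EReal) := by
  classical
  induction s using Finset.induction with
  | empty => simp
  | insert _ _ hnm ih => rw [Finset.sum_insert hnm, Finset.sum_insert hnm, EReal.coe_add, ih]

private lemma ereal_sum_ne_bot {ι : Type*} {s : Finset ι} {f : ι → EReal}
    (h : ∀ i ∈ s, f i ≠ ⊥) : ∑ i ∈ s, f i ≠ ⊥ := by
  classical
  induction s using Finset.induction with
  | empty => simp
  | insert _ _ hnm ih =>
    rename_i a t
    rw [Finset.sum_insert hnm]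
    rw [Ne, EReal.add_eq_bot_iff]
    push_neg
    exact ⟨h a (Finset.mem_insert_self a t), ih fun i hi => h i (Finset.mem_insert_of_mem hi)⟩

private lemma ereal_top_le_sum {ι : Type*} {s : Finset ι} {f : ι → EReal} {a : ι}
    (ha : a ∈ s) (hfa : f a = ⊤) (h : ∀ i ∈ s, f i ≠ ⊥) : (⊤ : EReal) ≤ ∑ i ∈ s, f i := by
  classical
  rw [← Finset.add_sum_erase s f ha, hfa,
    EReal.top_add_of_ne_bot (ereal_sum_ne_bot fun i hi => h i (Finset.mem_of_mem_erase hi))]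

private lemma ereal_coe_mul_ne_bot {c : ℝ} (hc : 0 ≤ c) {x : EReal} (hx : x ≠ ⊥) :
    (c : EReal) * x ≠ ⊥ := by
  rcases hc.eq_or_lt with h | hc
  · simp [← h]
  induction x using EReal.rec with
  | bot => exact absurd rfl hx
  | coe r => rw [← EReal.coe_mul]; exact EReal.coe_ne_bot _
  | top => rw [EReal.coe_mul_top_of_pos hc]; simp

private lemma KL_nonneg {Y : Type*} [Fintype Y] {P Q : Y → ℝ}
    (hP0 : ∀ y, 0 ≤ P y) (hP1 : ∑ y, P y = 1)
    (hQ0 : ∀ y, 0 ≤ Q y) (hQ1 : ∑ y, Q y ≤ 1) : (0 : EReal) ≤ KL P Q := by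
  classical
  unfold KL
  set t : Y → EReal := fun y =>
    if P y = 0 then (0 : EReal) else if Q y = 0 then (⊤ : EReal)
    else ((P y * Real.logb 2 (P y / Q y) : ℝ) : EReal) with ht
  have htne : ∀ y, t y ≠ ⊥ := by
    intro y
    simp only [ht]
    split_ifs <;> simp [← EReal.coe_mul]
  by_cases hbad : ∃ y, P y ≠ 0 ∧ Q y = 0
  · obtain ⟨y, hPy, hQy⟩ := hbad
    have : t y = ⊤ := by simp only [ht]; rw [if_neg hPy, if_pos hQy]
    exact le_trans le_top (ereal_top_le_sum (Finset.mem_univ y) this fun i _ => htne i)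
  · push_neg at hbad
    have hteq : ∀ y, t y =
        (((if P y = 0 then 0 else P y * Real.logb 2 (P y / Q y)) : ℝ) : EReal) := by
      intro y
      simp only [ht]
      by_cases h : P y = 0
      · simp [h]
      · rw [if_neg h, if_neg (hbad y h), if_neg h]
    have hsum : ∑ y, t y =
        (((∑ y, if P y = 0 then 0 else P y * Real.logb 2 (P y / Q y)) : ℝ) : EReal) := by
      rw [ereal_coe_sum]
      exact Finset.sum_congr rfl fun y _ => hteq y
    rw [hsum]
    rw [← EReal.coe_zero, EReal.coe_le_coe_iff]
    have hlog2 : (0 : ℝ) < Real.log 2 := Real.log_pos one_lt_two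
    have hpoint : ∀ y, (P y - (if P y = 0 then P y else Q y)) / Real.log 2 ≤
        (if P y = 0 then 0 else P y * Real.logb 2 (P y / Q y)) := by
      intro y
      by_cases h : P y = 0
      · simp [h]
      · rw [if_neg h, if_neg h]
        have hp : 0 < P y := lt_of_le_of_ne (hP0 y) (Ne.symm h)
        have hq : 0 < Q y := lt_of_le_of_ne (hQ0 y) (Ne.symm (hbad y h))
        have hkey : Real.log (Q y) - Real.log (P y) ≤ Q y / P y - 1 := by
          have := Real.log_le_sub_one_of_pos (show 0 < Q y / P y from div_pos hq hp)
          rwa [Real.log_div (ne_of_gt hq) (ne_of_gt hp)] at this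
        have h2 : P y * (Real.log (Q y) - Real.log (P y)) ≤ Q y - P y := by
          have := mul_le_mul_of_nonneg_left hkey (le_of_lt hp)
          calc P y * (Real.log (Q y) - Real.log (P y)) ≤ P y * (Q y / P y - 1) := this
            _ = Q y - P y := by field_simp
        have h3 : P y - Q y ≤ P y * (Real.log (P y) - Real.log (Q y)) := by nlinarith
        calc (P y - Q y) / Real.log 2
            ≤ (P y * (Real.log (P y) - Real.log (Q y))) / Real.log 2 := by gcongr
          _ = P y * Real.logb 2 (P y / Q y) := by
            rw [Real.logb, Real.log_div (ne_of_gt hp) (ne_of_gt hq)]; ring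
    have hsum2 : ∑ y, (P y - (if P y = 0 then P y else Q y)) / Real.log 2 ≤
        ∑ y, (if P y = 0 then 0 else P y * Real.logb 2 (P y / Q y)) :=
      Finset.sum_le_sum fun y _ => hpoint y
    refine le_trans ?_ hsum2
    rw [← Finset.sum_div]
    apply div_nonneg _ (le_of_lt hlog2)
    rw [Finset.sum_sub_distrib, hP1, sub_nonneg]
    refine le_trans (Finset.sum_le_sum fun y _ => ?_) hQ1
    by_cases h : P y = 0
    · rw [if_pos h, h]; exact hQ0 y
    · rw [if_neg h]

private lemma concave_logb : ConcaveOn ℝ (Set.Ioi 0) (Real.logb 2) := by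
  have h := strictConcaveOn_log_Ioi.concaveOn.smul
    (c := (Real.log 2)⁻¹) (by positivity)
  have he : Real.logb 2 = (Real.log 2)⁻¹ • Real.log := by
    funext x; simp [Real.logb, div_eq_inv_mul, smul_eq_mul]
  rw [he]; exact h

private lemma logb_jensen {ι : Type*} (s : Finset ι) (w : ι → ℝ) (q : ι → ℝ)
    (hw0 : ∀ d ∈ s, 0 ≤ w d) (hw1 : ∑ d ∈ s, w d = 1) (hq : ∀ d ∈ s, 0 < q d) :
    ∑ d ∈ s, w d * Real.logb 2 (q d) ≤ Real.logb 2 (∑ d ∈ s, w d * q d) := by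
  have h := concave_logb.le_map_sum hw0 hw1 (fun d hd => Set.mem_Ioi.2 (hq d hd))
  simpa [smul_eq_mul] using h

private lemma KL_mix_le {ι Y : Type*} [Fintype ι] [Fintype Y]
    (w : ι → ℝ) (hw0 : ∀ d, 0 ≤ w d) (hw1 : ∑ d, w d = 1)
    (P : Y → ℝ) (hP0 : ∀ y, 0 ≤ P y)
    (Q : ι → Y → ℝ) (hQ0 : ∀ d y, 0 ≤ Q d y) :
    KL P (fun y => ∑ d, w d * Q d y) ≤ ∑ d, ((w d : ℝ) : EReal) * KL P (Q d) := by
  classical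
  unfold KL
  set t : ι → Y → EReal := fun d y =>
    if P y = 0 then (0 : EReal) else if Q d y = 0 then (⊤ : EReal)
    else ((P y * Real.logb 2 (P y / Q d y) : ℝ) : EReal) with ht
  have htne : ∀ d y, t d y ≠ ⊥ := by
    intro d y; simp only [ht]; split_ifs <;> simp [← EReal.coe_mul]
  calc ∑ y, (if P y = 0 then (0 : EReal) else if (∑ d, w d * Q d y) = 0 then ⊤
        else ((P y * Real.logb 2 (P y / ∑ d, w d * Q d y) : ℝ) : EReal))
      ≤ ∑ y, ∑ d, ((w d : ℝ) : EReal) * t d y := ?_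
    _ = ∑ d, ∑ y, ((w d : ℝ) : EReal) * t d y := Finset.sum_comm
    _ = ∑ d, ((w d : ℝ) : EReal) * ∑ y, t d y := by
        refine Finset.sum_congr rfl fun d _ => (ereal_coe_mul_sum (hw0 d) _ _).symm
  refine Finset.sum_le_sum fun y _ => ?_
  by_cases hp : P y = 0
  · simp [hp, ht]
  by_cases hbad : ∃ d, w d ≠ 0 ∧ Q d y = 0
  · obtain ⟨d0, hwd0, hQd0⟩ := hbad
    have hwd0' : 0 < w d0 := lt_of_le_of_ne (hw0 d0) (Ne.symm hwd0)
    have htop : ((w d0 : ℝ) : EReal) * t d0 y = ⊤ := by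
      simp only [ht]
      rw [if_neg hp, if_pos hQd0, EReal.coe_mul_top_of_pos hwd0']
    refine le_trans le_top (ereal_top_le_sum (Finset.mem_univ d0) htop fun d _ => ?_)
    exact ereal_coe_mul_ne_bot (hw0 d) (htne d y)
  · push_neg at hbad
    have hpp : 0 < P y := lt_of_le_of_ne (hP0 y) (Ne.symm hp)
    have hd0 : ∃ d, w d ≠ 0 := by
      by_contra h; push_neg at h
      rw [Finset.sum_congr rfl fun d _ => h d] at hw1
      simp at hw1
    obtain ⟨d0, hwd0⟩ := hd0
    have hwd0' : 0 < w d0 := lt_of_le_of_ne (hw0 d0) (Ne.symm hwd0)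
    have hm : 0 < ∑ d, w d * Q d y := by
      refine Finset.sum_pos' (fun d _ => mul_nonneg (hw0 d) (hQ0 d y)) ⟨d0, Finset.mem_univ d0, ?_⟩
      exact mul_pos hwd0' (lt_of_le_of_ne (hQ0 d0 y) (Ne.symm (hbad d0 hwd0)))
    rw [if_neg hp, if_neg (ne_of_gt hm)]
    have hterm : ∀ d, ((w d : ℝ) : EReal) * t d y =
        (((if w d = 0 then 0 else w d * (P y * Real.logb 2 (P y / Q d y))) : ℝ) : EReal) := by
      intro d
      by_cases hw : w d = 0
      · simp [hw, ht]
      · simp only [ht]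
        rw [if_neg hp, if_neg (hbad d hw), if_neg hw, ← EReal.coe_mul]
    rw [Finset.sum_congr rfl fun d _ => hterm d, ← ereal_coe_sum, EReal.coe_le_coe_iff]
    -- now a real inequality
    set S : Finset ι := Finset.univ.filter (fun d => w d ≠ 0) with hS
    have hSw : ∑ d ∈ S, w d = 1 := by rw [hS, Finset.sum_filter_ne_zero]; exact hw1
    have hqS : ∀ d ∈ S, 0 < Q d y := by
      intro d hd
      rw [hS, Finset.mem_filter] at hd
      exact lt_of_le_of_ne (hQ0 d y) (Ne.symm (hbad d hd.2))
    have hmS : ∑ d, w d * Q d y = ∑ d ∈ S, w d * Q d y := by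
      refine (Finset.sum_subset (Finset.filter_subset _ _) fun d _ hd => ?_).symm
      have : w d = 0 := by
        by_contra h
        exact hd (Finset.mem_filter.2 ⟨Finset.mem_univ d, h⟩)
      rw [this, zero_mul]
    have hA := logb_jensen S w (fun d => Q d y)
      (fun d _ => hw0 d) hSw hqS
    have hrhs : (∑ d, if w d = 0 then 0 else w d * (P y * Real.logb 2 (P y / Q d y)))
        = P y * Real.logb 2 (P y) * (∑ d ∈ S, w d)
          - P y * ∑ d ∈ S, w d * Real.logb 2 (Q d y) := by
      rw [← Finset.sum_filter_of_ne (p := fun d => w d ≠ 0)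
        (f := fun d => if w d = 0 then 0 else w d * (P y * Real.logb 2 (P y / Q d y))) ?side]
      · rw [Finset.mul_sum, Finset.mul_sum, ← Finset.sum_sub_distrib]
        refine Finset.sum_congr rfl fun d hd => ?_
        have hd2 : w d ≠ 0 := (Finset.mem_filter.1 hd).2
        rw [if_neg hd2, Real.logb_div (ne_of_gt hpp) (hbad d hd2)]
        ring
      case side =>
        intro d _ h hw
        exact absurd (by simp [hw]) h
    rw [hrhs, Real.logb_div (ne_of_gt hpp) (ne_of_gt hm), hSw]
    rw [hmS] at hm ⊢
    have hA' : ∑ d ∈ S, w d * Real.logb 2 (Q d y) ≤ Real.logb 2 (∑ d ∈ S, w d * Q d y) := hA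
    nlinarith [hA', hpp]

private lemma sum_prod_eq_one {ι X : Type*} [Fintype ι] [Fintype X] [DecidableEq ι]
    (w : X → ℝ) (hw : ∑ x, w x = 1) :
    ∑ g : ι → X, ∏ i, w (g i) = 1 := by
  rw [← Fintype.prod_sum (fun (_ : ι) (x : X) => w x)]
  simp [hw]

private lemma sum_prod_mul {ι X : Type*} [Fintype ι] [Fintype X] [DecidableEq ι]
    (w : X → ℝ) (hw1 : ∑ x, w x = 1) (j : ι) (f : X → ℝ) :
    ∑ g : ι → X, (∏ i, w (g i)) * f (g j) = ∑ x, w x * f x := by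
  classical
  rw [← Equiv.sum_comp (Equiv.funSplitAt j X).symm
    (fun g => (∏ i, w (g i)) * f (g j))]
  rw [Fintype.sum_prod_type]
  have key : ∀ (x : X) (h : {i // i ≠ j} → X),
      (∏ i, w (((Equiv.funSplitAt j X).symm (x, h)) i)) *
        f (((Equiv.funSplitAt j X).symm (x, h)) j)
      = (w x * f x) * ∏ i : {i // i ≠ j}, w (h i) := by
    intro x h
    have hj : ((Equiv.funSplitAt j X).symm (x, h)) j = x := by
      simp [Equiv.funSplitAt, Equiv.piSplitAt]
    have hoff : ∀ i (hi : i ≠ j), ((Equiv.funSplitAt j X).symm (x, h)) i = h ⟨i, hi⟩ := by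
      intro i hi
      simp [Equiv.funSplitAt, Equiv.piSplitAt, hi]
    rw [hj]
    rw [← Finset.mul_prod_erase Finset.univ _ (Finset.mem_univ j), hj]
    have : ∏ i ∈ Finset.univ.erase j, w (((Equiv.funSplitAt j X).symm (x, h)) i)
        = ∏ i : {i // i ≠ j}, w (h i) := by
      rw [Finset.prod_subtype (Finset.univ.erase j)
        (p := fun i => i ≠ j) (fun i => by simp [Finset.mem_erase])
        (fun i => w (((Equiv.funSplitAt j X).symm (x, h)) i))]
      refine Finset.prod_congr rfl fun i _ => ?_
      rw [hoff i.1 i.2]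
    rw [this]; ring
  rw [Finset.sum_congr rfl fun x _ => Finset.sum_congr rfl fun h _ => key x h]
  rw [Finset.sum_congr rfl fun x _ => (Finset.mul_sum _ _ _).symm.trans (by
    rw [sum_prod_eq_one (ι := {i // i ≠ j}) w hw1, mul_one])]

private lemma sum_mul_le_ub {ι : Type*} [Fintype ι]
    (w : ι → ℝ) (hw0 : ∀ i, 0 ≤ w i) (hw1 : ∑ i, w i = 1) (f : ι → EReal)
    (s : EReal) (hle : ∀ i, f i ≤ s) :
    ∑ i, ((w i : ℝ) : EReal) * f i ≤ s := by
  classical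
  induction s using EReal.rec with
  | top => exact le_top
  | coe r =>
    calc ∑ i, ((w i : ℝ) : EReal) * f i ≤ ∑ i, ((w i : ℝ) : EReal) * ((r : ℝ) : EReal) :=
          Finset.sum_le_sum fun i _ =>
            mul_le_mul_of_nonneg_left (hle i) (EReal.coe_nonneg.2 (hw0 i))
      _ = ((r : ℝ) : EReal) := by
          rw [Finset.sum_congr rfl fun i _ => (EReal.coe_mul (w i) r).symm, ← ereal_coe_sum,
            ← Finset.sum_mul, hw1, one_mul]
  | bot =>
    have hle' : ∀ i, f i = ⊥ := fun i => le_bot_iff.1 (hle i)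
    have hi0 : ∃ i, 0 < w i := by
      by_contra h; push_neg at h
      have : ∀ i, w i = 0 := fun i => le_antisymm (h i) (hw0 i)
      rw [Finset.sum_congr rfl fun i _ => this i] at hw1
      simp at hw1
    obtain ⟨i0, hi0⟩ := hi0
    rw [← Finset.add_sum_erase _ _ (Finset.mem_univ i0), hle' i0,
      EReal.coe_mul_bot_of_pos hi0]
    have : ∑ i ∈ Finset.univ.erase i0, ((w i : ℝ) : EReal) * f i ≤ 0 := by
      refine Finset.sum_nonpos fun i _ => ?_
      rw [hle' i]
      rcases (hw0 i).eq_or_lt with h | h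
      · rw [← h]; simp
      · rw [EReal.coe_mul_bot_of_pos h]; exact bot_le
    calc (⊥ : EReal) + ∑ i ∈ Finset.univ.erase i0, ((w i : ℝ) : EReal) * f i
        ≤ ⊥ + 0 := add_le_add_right this _
      _ = ⊥ := by simp

private lemma sum_mul_le_sup {ι : Type*} [Fintype ι]
    (w : ι → ℝ) (hw0 : ∀ i, 0 ≤ w i) (hw1 : ∑ i, w i = 1) (f : ι → EReal) :
    ∑ i, ((w i : ℝ) : EReal) * f i ≤ Finset.univ.sup f :=
  sum_mul_le_ub w hw0 hw1 f _ fun i => Finset.le_sup (Finset.mem_univ i)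

private lemma splitAt_self {ι X : Type*} [DecidableEq ι] (j : ι) (x : X)
    (h : {i // i ≠ j} → X) : (Equiv.funSplitAt j X).symm (x, h) j = x := by
  simp [Equiv.funSplitAt, Equiv.piSplitAt]

private lemma splitAt_ne {ι X : Type*} [DecidableEq ι] (j : ι) (x : X)
    (h : {i // i ≠ j} → X) (i : ι) (hi : i ≠ j) :
    (Equiv.funSplitAt j X).symm (x, h) i = h ⟨i, hi⟩ := by
  simp [Equiv.funSplitAt, Equiv.piSplitAt, hi]

private lemma prod_splitAt {ι X : Type*} [Fintype ι] [DecidableEq ι] (w : X → ℝ) (j : ι)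
    (x : X) (h : {i // i ≠ j} → X) :
    ∏ i, w (((Equiv.funSplitAt j X).symm (x, h)) i) = w x * ∏ i : {i // i ≠ j}, w (h i) := by
  rw [← Finset.mul_prod_erase Finset.univ _ (Finset.mem_univ j), splitAt_self]
  congr 1
  rw [Finset.prod_subtype (Finset.univ.erase j)
    (p := fun i => i ≠ j) (fun i => by simp [Finset.mem_erase])
    (fun i => w (((Equiv.funSplitAt j X).symm (x, h)) i))]
  exact Finset.prod_congr rfl fun i _ => by rw [splitAt_ne j x h i.1 i.2]

/-- Proposition 2 (MaxEJS): (i) the maximal EJS divergence over all encoding functions is at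
least the capacity `C`; (ii) if some posterior is at least `ρ̃`, the maximal EJS divergence
is at least `ρ̃·C₁`, where `C₁ = max_{x,x'} D(P_x‖P_{x'})`. -/
theorem maxEJS_bounds
    (K L M : ℕ) (hM : 2 ≤ M)
    (Pch : Fin (K + 1) → Fin (L + 1) → ℝ)
    (hch0 : ∀ x y, 0 ≤ Pch x y) (hch1 : ∀ x, ∑ y, Pch x y = 1)
    (C : ℝ)
    (pistar : Fin (K + 1) → ℝ)
    (hpi0 : ∀ x, 0 ≤ pistar x) (hpi1 : ∑ x, pistar x = 1)
    -- `C` is the capacity: no input distribution has larger mutual information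
    (hCmax : ∀ π : Fin (K + 1) → ℝ, (∀ x, 0 ≤ π x) → ∑ x, π x = 1 →
      ∑ x, ((π x : ℝ) : EReal) * KL (Pch x) (fun y => ∑ x', π x' * Pch x' y)
        ≤ (C : EReal))
    -- `π*` is capacity-achieving: `D(P_x ‖ Σ_{x'} π*_{x'} P_{x'}) = C` whenever `π*_x > 0`
    (hFact : ∀ x, 0 < pistar x →
      KL (Pch x) (fun y => ∑ x', pistar x' * Pch x' y) = (C : EReal))
    (C₁ : EReal)
    (hC₁ : C₁ = univ.sup (fun p : Fin (K + 1) × Fin (K + 1) => KL (Pch p.1) (Pch p.2)))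
    (ρ : Fin M → ℝ) (hρpos : ∀ i, 0 < ρ i) (hρ1 : ∑ i, ρ i = 1) :
    (C : EReal) ≤ univ.sup (fun γ : Fin M → Fin (K + 1) => EJS ρ (fun i => Pch (γ i)))
    ∧ ∀ ρtil : ℝ, 0 < ρtil → ρtil < 1 → (∃ i, ρtil ≤ ρ i) →
        ((ρtil : ℝ) : EReal) * C₁
          ≤ univ.sup (fun γ : Fin M → Fin (K + 1) => EJS ρ (fun i => Pch (γ i))) := by
  classical
  have hρlt : ∀ i : Fin M, ρ i < 1 := by
    intro i
    obtain ⟨j, hj⟩ := Fintype.exists_ne_of_one_lt_card (by simpa using (show 1 < M by omega)) i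
    have h1 : ρ i + ∑ k ∈ univ.erase i, ρ k = 1 := by
      rw [Finset.add_sum_erase _ _ (Finset.mem_univ i)]; exact hρ1
    have h2 : 0 < ∑ k ∈ univ.erase i, ρ k :=
      Finset.sum_pos (fun k _ => hρpos k) ⟨j, Finset.mem_erase.2 ⟨hj, Finset.mem_univ j⟩⟩
    linarith
  have hρc : ∀ i : Fin M, (0:ℝ) < 1 - ρ i := fun i => by linarith [hρlt i]
  have hρe : ∀ i : Fin M, ∑ j ∈ univ.erase i, ρ j = 1 - ρ i := by
    intro i
    have h1 : ρ i + ∑ k ∈ univ.erase i, ρ k = 1 := by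
      rw [Finset.add_sum_erase _ _ (Finset.mem_univ i)]; exact hρ1
    linarith
  have hρtsum : ∀ i : Fin M, ∑ j ∈ univ.erase i, ρ j / (1 - ρ i) = 1 := by
    intro i
    rw [← Finset.sum_div, hρe i, div_self (ne_of_gt (hρc i))]
  have hρt0 : ∀ i j : Fin M, 0 ≤ ρ j / (1 - ρ i) :=
    fun i j => div_nonneg (le_of_lt (hρpos j)) (le_of_lt (hρc i))
  set SUP := univ.sup (fun γ : Fin M → Fin (K + 1) => EJS ρ (fun i => Pch (γ i))) with hSUP
  constructor
  · -- part (i)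
    set w : (Fin M → Fin (K + 1)) → ℝ := fun γ => ∏ k, pistar (γ k) with hw
    have hw0 : ∀ γ, 0 ≤ w γ := fun γ => Finset.prod_nonneg fun k _ => hpi0 _
    have hw1 : ∑ γ, w γ = 1 := sum_prod_eq_one pistar hpi1
    have key : ∀ i : Fin M, (C : EReal) ≤
        ∑ γ : Fin M → Fin (K + 1), ((w γ : ℝ) : EReal) *
          KL (Pch (γ i)) (fun y => ∑ j ∈ univ.erase i, (ρ j / (1 - ρ i)) * Pch (γ j) y) := by
      intro i
      set v : ({j : Fin M // j ≠ i} → Fin (K + 1)) → ℝ := fun δ => ∏ j, pistar (δ j) with hv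
      have hv0 : ∀ δ, 0 ≤ v δ := fun δ => Finset.prod_nonneg fun k _ => hpi0 _
      have hv1 : ∑ δ, v δ = 1 := sum_prod_eq_one pistar hpi1
      set Qd : ({j : Fin M // j ≠ i} → Fin (K + 1)) → Fin (L + 1) → ℝ :=
        fun δ y => ∑ j : {j : Fin M // j ≠ i}, (ρ j.1 / (1 - ρ i)) * Pch (δ j) y with hQd
      have hQd0 : ∀ δ y, 0 ≤ Qd δ y := fun δ y =>
        Finset.sum_nonneg fun j _ => mul_nonneg (hρt0 i j.1) (hch0 _ y)
      have hsub1 : ∑ j : {j : Fin M // j ≠ i}, ρ j.1 / (1 - ρ i) = 1 := by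
        rw [← Finset.sum_subtype (p := fun j => j ≠ i) (univ.erase i) (fun x => by simp)
          (fun j => ρ j / (1 - ρ i))]
        exact hρtsum i
      have hsplit : ∑ γ : Fin M → Fin (K + 1), ((w γ : ℝ) : EReal) *
            KL (Pch (γ i)) (fun y => ∑ j ∈ univ.erase i, (ρ j / (1 - ρ i)) * Pch (γ j) y)
          = ∑ x, ∑ δ, ((pistar x * v δ : ℝ) : EReal) * KL (Pch x) (Qd δ) := by
        rw [← Equiv.sum_comp (Equiv.funSplitAt i (Fin (K + 1))).symm
          (fun γ => ((w γ : ℝ) : EReal) * KL (Pch (γ i))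
            (fun y => ∑ j ∈ univ.erase i, (ρ j / (1 - ρ i)) * Pch (γ j) y))]
        rw [Fintype.sum_prod_type]
        refine Finset.sum_congr rfl fun x _ => Finset.sum_congr rfl fun δ _ => ?_
        have h1 : w ((Equiv.funSplitAt i (Fin (K + 1))).symm (x, δ)) = pistar x * v δ :=
          prod_splitAt pistar i x δ
        have h2 : ((Equiv.funSplitAt i (Fin (K + 1))).symm (x, δ)) i = x :=
          splitAt_self i x δ
        have h3 : (fun y => ∑ j ∈ univ.erase i, (ρ j / (1 - ρ i)) *
              Pch (((Equiv.funSplitAt i (Fin (K + 1))).symm (x, δ)) j) y) = Qd δ := by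
          funext y
          rw [Finset.sum_subtype (p := fun j => j ≠ i) (univ.erase i) (fun x => by simp)
            (fun j => (ρ j / (1 - ρ i)) *
              Pch (((Equiv.funSplitAt i (Fin (K + 1))).symm (x, δ)) j) y)]
          exact Finset.sum_congr rfl fun j _ => by rw [splitAt_ne i x δ j.1 j.2]
        rw [h1, h2, h3]
      have hmix : ∀ x, KL (Pch x) (fun y => ∑ x', pistar x' * Pch x' y)
          ≤ ∑ δ, ((v δ : ℝ) : EReal) * KL (Pch x) (Qd δ) := by
        intro x
        have hj := KL_mix_le v hv0 hv1 (Pch x) (hch0 x) Qd hQd0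
        have hfun : (fun y => ∑ δ, v δ * Qd δ y)
            = (fun y => ∑ x', pistar x' * Pch x' y) := by
          funext y
          calc ∑ δ, v δ * Qd δ y
              = ∑ δ, ∑ j : {j : Fin M // j ≠ i},
                  (ρ j.1 / (1 - ρ i)) * (v δ * Pch (δ j) y) := by
                refine Finset.sum_congr rfl fun δ _ => ?_
                rw [hQd, Finset.mul_sum]
                exact Finset.sum_congr rfl fun j _ => by ring
            _ = ∑ j : {j : Fin M // j ≠ i}, (ρ j.1 / (1 - ρ i)) *
                  ∑ δ, v δ * Pch (δ j) y := by
                rw [Finset.sum_comm]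
                exact Finset.sum_congr rfl fun j _ => by rw [Finset.mul_sum]
            _ = ∑ j : {j : Fin M // j ≠ i}, (ρ j.1 / (1 - ρ i)) *
                  ∑ x', pistar x' * Pch x' y := by
                refine Finset.sum_congr rfl fun j _ => ?_
                rw [sum_prod_mul pistar hpi1 j (fun x' => Pch x' y)]
            _ = ∑ x', pistar x' * Pch x' y := by
                rw [← Finset.sum_mul, hsub1, one_mul]
        rwa [hfun] at hj
      have hperx : ∀ x, ((pistar x : ℝ) : EReal) * ((C : ℝ) : EReal)
          ≤ ((pistar x : ℝ) : EReal) * ∑ δ, ((v δ : ℝ) : EReal) * KL (Pch x) (Qd δ) := by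
        intro x
        rcases (hpi0 x).eq_or_lt with h | h
        · rw [← h]; simp
        · exact mul_le_mul_of_nonneg_left
            (le_trans (le_of_eq (hFact x h).symm) (hmix x)) (EReal.coe_nonneg.2 (hpi0 x))
      calc (C : EReal) = ∑ x, ((pistar x : ℝ) : EReal) * ((C : ℝ) : EReal) := by
            rw [Finset.sum_congr rfl fun x _ => (EReal.coe_mul (pistar x) C).symm,
              ← ereal_coe_sum, ← Finset.sum_mul, hpi1, one_mul]
        _ ≤ ∑ x, ((pistar x : ℝ) : EReal) * ∑ δ, ((v δ : ℝ) : EReal) * KL (Pch x) (Qd δ) :=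
            Finset.sum_le_sum fun x _ => hperx x
        _ = ∑ x, ∑ δ, ((pistar x * v δ : ℝ) : EReal) * KL (Pch x) (Qd δ) := by
            refine Finset.sum_congr rfl fun x _ => ?_
            rw [ereal_coe_mul_sum (hpi0 x)]
            exact Finset.sum_congr rfl fun δ _ => by
              rw [EReal.coe_mul, mul_assoc]
        _ = _ := hsplit.symm
    have main : (C : EReal) ≤
        ∑ γ : Fin M → Fin (K + 1), ((w γ : ℝ) : EReal) * EJS ρ (fun i => Pch (γ i)) := by
      have h1 : ∑ γ : Fin M → Fin (K + 1), ((w γ : ℝ) : EReal) * EJS ρ (fun i => Pch (γ i))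
          = ∑ i : Fin M, ((ρ i : ℝ) : EReal) *
              ∑ γ : Fin M → Fin (K + 1), ((w γ : ℝ) : EReal) * KL (Pch (γ i))
                (fun y => ∑ j ∈ univ.erase i, (ρ j / (1 - ρ i)) * Pch (γ j) y) := by
        calc ∑ γ : Fin M → Fin (K + 1), ((w γ : ℝ) : EReal) * EJS ρ (fun i => Pch (γ i))
            = ∑ γ : Fin M → Fin (K + 1), ∑ i : Fin M, ((w γ : ℝ) : EReal) *
                (((ρ i : ℝ) : EReal) * KL (Pch (γ i))
                  (fun y => ∑ j ∈ univ.erase i, (ρ j / (1 - ρ i)) * Pch (γ j) y)) := by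
              refine Finset.sum_congr rfl fun γ _ => ?_
              rw [EJS, ereal_coe_mul_sum (hw0 γ)]
          _ = ∑ i : Fin M, ∑ γ : Fin M → Fin (K + 1), ((w γ : ℝ) : EReal) *
                (((ρ i : ℝ) : EReal) * KL (Pch (γ i))
                  (fun y => ∑ j ∈ univ.erase i, (ρ j / (1 - ρ i)) * Pch (γ j) y)) :=
              Finset.sum_comm
          _ = ∑ i : Fin M, ((ρ i : ℝ) : EReal) *
              ∑ γ : Fin M → Fin (K + 1), ((w γ : ℝ) : EReal) * KL (Pch (γ i))
                (fun y => ∑ j ∈ univ.erase i, (ρ j / (1 - ρ i)) * Pch (γ j) y) := by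
              refine Finset.sum_congr rfl fun i _ => ?_
              rw [ereal_coe_mul_sum (le_of_lt (hρpos i))]
              exact Finset.sum_congr rfl fun γ _ => mul_left_comm _ _ _
      rw [h1]
      calc (C : EReal) = ∑ i : Fin M, ((ρ i : ℝ) : EReal) * ((C : ℝ) : EReal) := by
            rw [Finset.sum_congr rfl fun i _ => (EReal.coe_mul (ρ i) C).symm,
              ← ereal_coe_sum, ← Finset.sum_mul, hρ1, one_mul]
        _ ≤ _ := Finset.sum_le_sum fun i _ =>
            mul_le_mul_of_nonneg_left (key i) (EReal.coe_nonneg.2 (le_of_lt (hρpos i)))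
    refine le_trans main ?_
    rw [hSUP]
    exact sum_mul_le_sup w hw0 hw1 (fun γ => EJS ρ fun i => Pch (γ i))
  · -- part (ii)
    intro ρtil hρtil0 hρtil1 ⟨i0, hi0⟩
    obtain ⟨p, _, hp⟩ := Finset.exists_mem_eq_sup (univ : Finset (Fin (K+1) × Fin (K+1)))
      Finset.univ_nonempty (fun p : Fin (K + 1) × Fin (K + 1) => KL (Pch p.1) (Pch p.2))
    set γ : Fin M → Fin (K + 1) := fun j => if j = i0 then p.1 else p.2 with hγ
    have hγi0 : γ i0 = p.1 := by simp [hγ]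
    have hγne : ∀ j, j ≠ i0 → γ j = p.2 := fun j hj => by simp [hγ, hj]
    -- the i0 term
    have hQeq : (fun y => ∑ j ∈ univ.erase i0, (ρ j / (1 - ρ i0)) * Pch (γ j) y)
        = Pch p.2 := by
      funext y
      rw [Finset.sum_congr rfl fun j hj => by
        rw [hγne j (Finset.mem_erase.1 hj).1]]
      rw [← Finset.sum_mul, hρtsum i0, one_mul]
    have hterm : ((ρ i0 : ℝ) : EReal) * KL (Pch (γ i0))
        (fun y => ∑ j ∈ univ.erase i0, (ρ j / (1 - ρ i0)) * Pch (γ j) y)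
        = ((ρ i0 : ℝ) : EReal) * C₁ := by
      rw [hQeq, hγi0, hC₁, hp]
    -- all other terms are nonneg
    have hKL0 : ∀ i : Fin M, (0 : EReal) ≤ KL (Pch (γ i))
        (fun y => ∑ j ∈ univ.erase i, (ρ j / (1 - ρ i)) * Pch (γ j) y) := by
      intro i
      refine KL_nonneg (hch0 _) (hch1 _) (fun y => ?_) ?_
      · exact Finset.sum_nonneg fun j _ => mul_nonneg (hρt0 i j) (hch0 _ y)
      · rw [Finset.sum_comm]
        rw [Finset.sum_congr rfl fun j _ => by
          rw [← Finset.mul_sum, hch1 (γ j), mul_one]]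
        rw [hρtsum i]
    have hC₁0 : (0 : EReal) ≤ C₁ := by
      rw [hC₁, hp]
      exact KL_nonneg (hch0 _) (hch1 _) (hch0 _) (le_of_eq (hch1 _))
    have hEJS : ((ρ i0 : ℝ) : EReal) * C₁ ≤ EJS ρ (fun i => Pch (γ i)) := by
      unfold EJS
      rw [← Finset.add_sum_erase _ _ (Finset.mem_univ i0), hterm]
      have hrest : (0 : EReal) ≤ ∑ i ∈ univ.erase i0, ((ρ i : ℝ) : EReal) *
          KL (Pch (γ i)) (fun y => ∑ j ∈ univ.erase i, (ρ j / (1 - ρ i)) * Pch (γ j) y) :=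
        Finset.sum_nonneg fun i _ =>
          mul_nonneg (EReal.coe_nonneg.2 (le_of_lt (hρpos i))) (hKL0 i)
      calc ((ρ i0 : ℝ) : EReal) * C₁ = ((ρ i0 : ℝ) : EReal) * C₁ + 0 := by rw [add_zero]
        _ ≤ _ := add_le_add_right hrest _
    calc ((ρtil : ℝ) : EReal) * C₁ ≤ ((ρ i0 : ℝ) : EReal) * C₁ :=
          mul_le_mul_of_nonneg_right (EReal.coe_le_coe_iff.2 hi0) hC₁0
      _ ≤ EJS ρ (fun i => Pch (γ i)) := hEJS
      _ ≤ SUP := by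
          rw [hSUP]
          exact Finset.le_sup (f := fun γ : Fin M → Fin (K+1) => EJS ρ fun i => Pch (γ i))
            (Finset.mem_univ γ)
end

section
/- Consider a binary-input channel with 𝒳 = {0,1}, finite output alphabet 𝒴, and pmfs P₀, P₁ on 𝒴 such that there is a permutation f of 𝒴 with f ∘ f = id and P₀(y) = P₁(f(y)) for all y ∈ 𝒴; set C₁ := D(P₀‖P₁). Let M ≥ 2, let ρ be a probability vector on Ω = {1,…,M} with ρᵢ < 1 for all i, let ρ̃ ∈ (1/2, 1), and suppose max_{i∈Ω} ρᵢ ≥ ρ̃. Let γ: Ω → {0,1} be an encoding function with π₀ := Σ_{i: γ(i)=0} ρᵢ, π₁ := Σ_{i: γ(i)=1} ρᵢ, δ := π₀ − π₁, and suppose 0 ≤ δ < ρᵢ for every i with γ(i) = 0. Then EJS(ρ, γ) ≥ ρ̃·C₁. -/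
open Finset

lemma coe_fsum {α : Type*} (s : Finset α) (f : α → ℝ) :
    ((∑ y ∈ s, f y : ℝ) : EReal) = ∑ y ∈ s, ((f y : ℝ) : EReal) := by
  induction s using Finset.cons_induction with
  | empty => simp
  | cons a s ha ih => simp [Finset.sum_cons, ih, EReal.coe_add]

lemma gibbs {Y : Type*} [Fintype Y] (P Q : Y → ℝ)
    (hP0 : ∀ y, 0 ≤ P y) (hP1 : ∑ y, P y = 1)
    (hQ0 : ∀ y, 0 ≤ Q y) (hQ1 : ∑ y, Q y ≤ 1) : 0 ≤ KL P Q := by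
  have hlog2 : (0:ℝ) < Real.log 2 := Real.log_pos (by norm_num)
  have key : ∀ y : Y, (((P y - Q y) / Real.log 2 : ℝ) : EReal)
      ≤ (if P y = 0 then (0 : EReal)
         else if Q y = 0 then (⊤ : EReal)
         else ((P y * Real.logb 2 (P y / Q y) : ℝ) : EReal)) := by
    intro y
    by_cases hp : P y = 0
    · rw [if_pos hp]
      have : ((P y - Q y) / Real.log 2 : ℝ) ≤ 0 := by
        apply div_nonpos_of_nonpos_of_nonneg _ hlog2.le
        have := hQ0 y; linarith
      exact_mod_cast this
    · rw [if_neg hp]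
      by_cases hq : Q y = 0
      · rw [if_pos hq]; exact le_top
      · rw [if_neg hq]
        have hp' : 0 < P y := lt_of_le_of_ne (hP0 y) (Ne.symm hp)
        have hq' : 0 < Q y := lt_of_le_of_ne (hQ0 y) (Ne.symm hq)
        have hlog : Real.log (Q y / P y) ≤ Q y / P y - 1 :=
          Real.log_le_sub_one_of_pos (by positivity)
        have h1 : P y - Q y ≤ P y * Real.log (P y / Q y) := by
          have h2 : Real.log (P y / Q y) = - Real.log (Q y / P y) := by
            rw [Real.log_div hp (ne_of_gt hq'), Real.log_div (ne_of_gt hq') hp]; ring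
          rw [h2]
          have h3 : P y * Real.log (Q y / P y) ≤ P y * (Q y / P y - 1) :=
            mul_le_mul_of_nonneg_left hlog (hP0 y)
          have h4 : P y * (Q y / P y - 1) = Q y - P y := by
            field_simp
          nlinarith [h3, h4]
        have : (P y - Q y) / Real.log 2 ≤ P y * Real.logb 2 (P y / Q y) := by
          rw [Real.logb, div_le_iff₀ hlog2] at *
          calc P y - Q y ≤ P y * Real.log (P y / Q y) := h1
            _ = P y * (Real.log (P y / Q y) / Real.log 2) * Real.log 2 := by
                field_simp
        exact_mod_cast this
  calc (0 : EReal) ≤ ((∑ y, (P y - Q y) / Real.log 2 : ℝ) : EReal) := by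
        have : (0:ℝ) ≤ ∑ y, (P y - Q y) / Real.log 2 := by
          rw [← Finset.sum_div, Finset.sum_sub_distrib, hP1]
          apply div_nonneg _ hlog2.le
          linarith
        exact_mod_cast this
    _ = ∑ y, (((P y - Q y) / Real.log 2 : ℝ) : EReal) := coe_fsum _ _
    _ ≤ KL P Q := Finset.sum_le_sum (fun y _ => key y)


/-- Proposition 4 (second part): for a symmetric binary-input channel
(`P₀(y) = P₁(f(y))` for an involutive permutation `f`) with `C₁ = D(P₀‖P₁)`, if
`max_i ρᵢ ≥ ρ̃ > 1/2` and the encoding function `γ` satisfies `0 ≤ π₀ − π₁ < ρᵢ` for every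
`i` with `γ(i) = 0`, then `EJS(ρ, γ) ≥ ρ̃·C₁`. -/
theorem balanced_encoding_ejs_ge_exponent
    {Y : Type*} [Fintype Y]
    (P0 P1 : Y → ℝ)
    (hP00 : ∀ y, 0 ≤ P0 y) (hP01 : ∑ y, P0 y = 1)
    (hP10 : ∀ y, 0 ≤ P1 y) (hP11 : ∑ y, P1 y = 1)
    (f : Y → Y) (hf : Function.Involutive f)
    (hsym : ∀ y, P0 y = P1 (f y))
    (M : ℕ) (hM : 2 ≤ M)
    (ρ : Fin M → ℝ) (hρ0 : ∀ i, 0 ≤ ρ i) (hρ1 : ∑ i, ρ i = 1)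
    (hρlt : ∀ i, ρ i < 1)
    (ρtil : ℝ) (hρtil1 : 1 / 2 < ρtil) (hρtil2 : ρtil < 1)
    (hmax : ∃ i, ρtil ≤ ρ i)
    (γ : Fin M → Fin 2)
    (hδ0 : 0 ≤ (∑ i ∈ univ.filter (fun i => γ i = 0), ρ i)
              - (∑ i ∈ univ.filter (fun i => γ i = 1), ρ i))
    (hδρ : ∀ i, γ i = 0 →
      (∑ j ∈ univ.filter (fun j => γ j = 0), ρ j)
          - (∑ j ∈ univ.filter (fun j => γ j = 1), ρ j) < ρ i) :
    ((ρtil : ℝ) : EReal) * KL P0 P1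
      ≤ EJS ρ (fun i => if γ i = 0 then P0 else P1) := by
  obtain ⟨i₀, hi₀⟩ := hmax
  set P : Fin M → Y → ℝ := fun i => if γ i = 0 then P0 else P1 with hP
  -- basic facts
  have hPnn : ∀ i, ∀ y, 0 ≤ P i y := by
    intro i y; simp only [hP]; split <;> [exact hP00 y; exact hP10 y]
  have hPsum : ∀ i, ∑ y, P i y = 1 := by
    intro i; simp only [hP]; split <;> [exact hP01; exact hP11]
  have h2 : ∀ x : Fin 2, ¬ x = 0 ↔ x = 1 := by decide
  have hsplit : (∑ i ∈ univ.filter (fun i => γ i = 0), ρ i)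
      + (∑ i ∈ univ.filter (fun i => γ i = 1), ρ i) = 1 := by
    rw [← hρ1]
    have := Finset.sum_filter_add_sum_filter_not univ (fun i => γ i = 0) ρ
    rw [Finset.filter_congr (fun i _ => h2 (γ i))] at this
    exact this
  -- γ i₀ = 0
  have hγ0 : γ i₀ = 0 := by
    by_contra h
    have h1 := (h2 (γ i₀)).mp h
    have : ρ i₀ ≤ ∑ i ∈ univ.filter (fun i => γ i = 1), ρ i :=
      Finset.single_le_sum (f := ρ) (fun i _ => hρ0 i) (by simp [h1])
    linarith
  -- every other j has γ j = 1
  have hγ1 : ∀ j, j ≠ i₀ → γ j ≠ 0 := by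
    intro j hj hj0
    have hsub : ({i₀, j} : Finset (Fin M)) ⊆ univ.filter (fun i => γ i = 0) := by
      intro x hx
      simp only [Finset.mem_insert, Finset.mem_singleton] at hx
      rcases hx with rfl | rfl <;> simp [hγ0, hj0]
    have hpair : ρ i₀ + ρ j = ∑ x ∈ ({i₀, j} : Finset (Fin M)), ρ x :=
      (Finset.sum_pair (Ne.symm hj)).symm
    have hle : ρ i₀ + ρ j ≤ ∑ i ∈ univ.filter (fun i => γ i = 0), ρ i := by
      rw [hpair]
      exact Finset.sum_le_sum_of_subset_of_nonneg hsub (fun i _ _ => hρ0 i)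
    have := hδρ j hj0
    have h0j := hρ0 j
    linarith
  -- the mixture at i₀ equals P1
  have hmix : (fun y => ∑ j ∈ univ.erase i₀, (ρ j / (1 - ρ i₀)) * P j y) = P1 := by
    funext y
    have h1 : ∀ j ∈ univ.erase i₀, (ρ j / (1 - ρ i₀)) * P j y
        = (ρ j / (1 - ρ i₀)) * P1 y := by
      intro j hj
      have hj' : j ≠ i₀ := (Finset.mem_erase.mp hj).1
      simp only [hP, if_neg (hγ1 j hj')]
    rw [Finset.sum_congr rfl h1, ← Finset.sum_mul, ← Finset.sum_div,
      Finset.sum_erase_eq_sub (Finset.mem_univ i₀), hρ1]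
    rw [div_self (by have := hρlt i₀; linarith), one_mul]
  -- KL  of the i₀ term
  have hterm : KL (P i₀) (fun y => ∑ j ∈ univ.erase i₀, (ρ j / (1 - ρ i₀)) * P j y)
      = KL P0 P1 := by
    rw [hmix]
    congr 1
    simp only [hP, if_pos hγ0]
  -- Each EJS term is nonneg
  have hnn : ∀ i : Fin M, (0 : EReal) ≤ ((ρ i : ℝ) : EReal) *
      KL (P i) (fun y => ∑ j ∈ univ.erase i, (ρ j / (1 - ρ i)) * P j y) := by
    intro i
    have hden : (0:ℝ) < 1 - ρ i := by have := hρlt i; linarith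
    apply mul_nonneg
    · exact_mod_cast hρ0 i
    · apply gibbs
      · exact hPnn i
      · exact hPsum i
      · intro y
        apply Finset.sum_nonneg
        intro j hj
        exact mul_nonneg (div_nonneg (hρ0 j) hden.le) (hPnn j y)
      · rw [Finset.sum_comm]
        have : ∀ j ∈ univ.erase i, ∑ y, (ρ j / (1 - ρ i)) * P j y
            = ρ j / (1 - ρ i) := by
          intro j hj
          rw [← Finset.mul_sum, hPsum j, mul_one]
        rw [Finset.sum_congr rfl this, ← Finset.sum_div,
          Finset.sum_erase_eq_sub (Finset.mem_univ i), hρ1, div_self (ne_of_gt hden)]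
  -- chain
  have hKnn : (0 : EReal) ≤ KL P0 P1 := gibbs P0 P1 hP00 hP01 hP10 hP11.le
  have step1 : ((ρtil : ℝ) : EReal) * KL P0 P1 ≤ ((ρ i₀ : ℝ) : EReal) * KL P0 P1 :=
    mul_le_mul_of_nonneg_right (by exact_mod_cast hi₀) hKnn
  have step2 : ((ρ i₀ : ℝ) : EReal) *
      KL (P i₀) (fun y => ∑ j ∈ univ.erase i₀, (ρ j / (1 - ρ i₀)) * P j y)
      ≤ EJS ρ P :=
    Finset.single_le_sum (fun i _ => hnn i) (Finset.mem_univ i₀)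
  rw [hterm] at step2
  exact le_trans step1 step2
end

section
/- Let p ∈ (0, 1/2) and define ν(x) := log₂((0.5 + (1−2p)x)/(0.5 − (1−2p)x)) for x ∈ [0, 1/2]. Then for all real numbers δ₁, δ₂ with 0 ≤ δ₁ ≤ δ₂ ≤ 1/2 and δ₂ > 0: ν(δ₂)/(ν(δ₁) + ν(δ₂)) ≥ δ₂/(δ₁ + δ₂); equivalently, δ₂·ν(δ₁) ≤ δ₁·ν(δ₂). -/
open Real Set

lemma bz_aux_convex (c : ℝ) (hc : 0 < c) (hc1 : c < 1) :
    ConvexOn ℝ (Icc (0:ℝ) (1/2))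
      (fun x => Real.log (1/2 + c*x) - Real.log (1/2 - c*x)) := by
  set f : ℝ → ℝ := fun x => Real.log (1/2 + c*x) - Real.log (1/2 - c*x) with hf
  set f' : ℝ → ℝ := fun x => c/(1/2 + c*x) + c/(1/2 - c*x) with hf'
  set f'' : ℝ → ℝ := fun x => -(c*c)/((1/2 + c*x)^2) + (c*c)/((1/2 - c*x)^2) with hf''
  set U : Set ℝ := Ioo (-(1/(2*c))) (1/(2*c)) with hU
  have hUo : IsOpen U := isOpen_Ioo
  have hsub : Icc (0:ℝ) (1/2) ⊆ U := by
    intro x hx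
    constructor
    · have : (0:ℝ) < 1/(2*c) := by positivity
      linarith [hx.1]
    · have h2 : (1:ℝ)/2 < 1/(2*c) := by
        rw [div_lt_div_iff₀ (by norm_num) (by positivity)]
        nlinarith
      linarith [hx.2]
  have hpos : ∀ x ∈ U, 0 < 1/2 + c*x ∧ 0 < 1/2 - c*x := by
    intro x hx
    have h1 : -(1/(2*c)) < x := hx.1
    have h2 : x < 1/(2*c) := hx.2
    have e1 : x * (2*c) < 1 := (lt_div_iff₀ (by positivity)).mp h2
    have key : (1/(2*c))*(2*c) = 1 := by field_simp
    have e2 := mul_lt_mul_of_pos_right h1 (show (0:ℝ) < 2*c by positivity)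
    constructor <;> nlinarith
  have hd1 : ∀ x ∈ U, HasDerivAt f (f' x) x := by
    intro x hx
    obtain ⟨hu, hv⟩ := hpos x hx
    have h1 : HasDerivAt (fun x => 1/2 + c*x) c x := by
      simpa using ((hasDerivAt_id x).const_mul c).const_add (1/2 : ℝ)
    have h2 : HasDerivAt (fun x => 1/2 - c*x) (-c) x := by
      simpa using ((hasDerivAt_id x).const_mul c).const_sub (1/2 : ℝ)
    have := (h1.log (ne_of_gt hu)).sub (h2.log (ne_of_gt hv))
    exact this.congr_deriv (by simp only [hf']; ring)
  have hd2 : ∀ x ∈ U, HasDerivAt f' (f'' x) x := by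
    intro x hx
    obtain ⟨hu, hv⟩ := hpos x hx
    have h1 : HasDerivAt (fun x => 1/2 + c*x) c x := by
      simpa using ((hasDerivAt_id x).const_mul c).const_add (1/2 : ℝ)
    have h2 : HasDerivAt (fun x => 1/2 - c*x) (-c) x := by
      simpa using ((hasDerivAt_id x).const_mul c).const_sub (1/2 : ℝ)
    have h1' := (hasDerivAt_const x c).div h1 (ne_of_gt hu)
    have h2' := (hasDerivAt_const x c).div h2 (ne_of_gt hv)
    have := h1'.add h2'
    exact this.congr_deriv (by simp only [hf'']; ring)
  have heq : Set.EqOn (deriv f) f' U := fun x hx => (hd1 x hx).deriv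
  have hderiv_eq : ∀ x ∈ U, deriv f =ᶠ[nhds x] f' := fun x hx =>
    Filter.eventuallyEq_of_mem (hUo.mem_nhds hx) heq
  apply convexOn_of_deriv2_nonneg (convex_Icc 0 (1/2))
  · intro x hx
    exact ((hd1 x (hsub hx)).differentiableAt).continuousAt.continuousWithinAt
  · intro x hx
    have hx' : x ∈ U := hsub (interior_subset hx)
    exact ((hd1 x hx').differentiableAt).differentiableWithinAt
  · intro x hx
    have hx' : x ∈ U := hsub (interior_subset hx)
    exact (((hd2 x hx').differentiableAt).congr_of_eventuallyEq
      (hderiv_eq x hx')).differentiableWithinAt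
  · intro x hx
    rw [interior_Icc] at hx
    have hx' : x ∈ U := hsub (Ioo_subset_Icc_self hx)
    obtain ⟨hu, hv⟩ := hpos x hx'
    have h2 : deriv (deriv f) x = f'' x := by
      rw [Filter.EventuallyEq.deriv_eq (hderiv_eq x hx')]
      exact (hd2 x hx').deriv
    have h3 : deriv^[2] f x = deriv (deriv f) x := by
      simp [Function.iterate_succ, Function.iterate_one]
    rw [h3, h2, hf'']
    show 0 ≤ -(c*c)/((1/2 + c*x)^2) + (c*c)/((1/2 - c*x)^2)
    have hsq : (1/2 - c*x)^2 ≤ (1/2 + c*x)^2 := by nlinarith [hx.1]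
    have : (c*c)/((1/2 + c*x)^2) ≤ (c*c)/((1/2 - c*x)^2) :=
      div_le_div_of_nonneg_left (by positivity) (by positivity) hsq
    rw [neg_div]
    linarith

set_option maxHeartbeats 1000000 in
/-- For `ν(x) = log₂((0.5 + (1−2p)x)/(0.5 − (1−2p)x))` with `p ∈ (0,1/2)` and
`0 ≤ δ₁ ≤ δ₂ ≤ 1/2`, `δ₂ > 0`, one has
`ν(δ₂)/(ν(δ₁) + ν(δ₂)) ≥ δ₂/(δ₁ + δ₂)`, equivalently `δ₂·ν(δ₁) ≤ δ₁·ν(δ₂)`. -/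
theorem bz_weight_inequality
    (p : ℝ) (hp0 : 0 < p) (hp1 : p < 1 / 2)
    (ν : ℝ → ℝ)
    (hν : ∀ x, ν x = Real.logb 2 ((0.5 + (1 - 2 * p) * x) / (0.5 - (1 - 2 * p) * x)))
    (δ₁ δ₂ : ℝ) (h10 : 0 ≤ δ₁) (h12 : δ₁ ≤ δ₂) (h2half : δ₂ ≤ 1 / 2) (h2pos : 0 < δ₂) :
    δ₂ / (δ₁ + δ₂) ≤ ν δ₂ / (ν δ₁ + ν δ₂) ∧ δ₂ * ν δ₁ ≤ δ₁ * ν δ₂ := by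
  set c := 1 - 2*p with hcdef
  have hc : 0 < c := by rw [hcdef]; linarith
  have hc1 : c < 1 := by rw [hcdef]; linarith
  set f : ℝ → ℝ := fun x => Real.log (1/2 + c*x) - Real.log (1/2 - c*x) with hfdef
  have hconv := bz_aux_convex c hc hc1
  have h1half : δ₁ ≤ 1/2 := le_trans h12 h2half
  -- positivity of the four arguments
  have hu1 : 0 < 1/2 + c*δ₁ := by nlinarith
  have hv1 : 0 < 1/2 - c*δ₁ := by nlinarith
  have hu2 : 0 < 1/2 + c*δ₂ := by nlinarith
  have hv2 : 0 < 1/2 - c*δ₂ := by nlinarith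
  have hlog2 : 0 < Real.log 2 := Real.log_pos (by norm_num)
  -- ν in terms of f
  have hνf : ∀ x, 0 < 1/2 + c*x → 0 < 1/2 - c*x → ν x = f x / Real.log 2 := by
    intro x hx1 hx2
    rw [hν x, Real.logb, show (0.5:ℝ) = 1/2 by norm_num,
      Real.log_div (ne_of_gt hx1) (ne_of_gt hx2)]
  have hν1 : ν δ₁ = f δ₁ / Real.log 2 := hνf δ₁ hu1 hv1
  have hν2 : ν δ₂ = f δ₂ / Real.log 2 := hνf δ₂ hu2 hv2
  -- signs of f
  have hf1 : 0 ≤ f δ₁ := by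
    have : Real.log (1/2 - c*δ₁) ≤ Real.log (1/2 + c*δ₁) :=
      Real.log_le_log hv1 (by nlinarith)
    simp only [hfdef]; linarith
  have hf2 : 0 < f δ₂ := by
    have : Real.log (1/2 - c*δ₂) < Real.log (1/2 + c*δ₂) :=
      Real.log_lt_log hv2 (by nlinarith)
    simp only [hfdef]; linarith
  -- convexity application: f δ₁ ≤ (δ₁/δ₂) * f δ₂
  have ht0 : 0 ≤ δ₁/δ₂ := div_nonneg h10 (le_of_lt h2pos)
  have ht1 : δ₁/δ₂ ≤ 1 := (div_le_one h2pos).mpr h12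
  have hmem0 : (0:ℝ) ∈ Set.Icc (0:ℝ) (1/2) := by constructor <;> norm_num
  have hmem2 : δ₂ ∈ Set.Icc (0:ℝ) (1/2) := ⟨le_of_lt h2pos, h2half⟩
  have hkey := hconv.2 hmem0 hmem2 (by linarith : (0:ℝ) ≤ 1 - δ₁/δ₂) ht0 (by ring)
  have harg : (1 - δ₁/δ₂) • (0:ℝ) + (δ₁/δ₂) • δ₂ = δ₁ := by
    simp [smul_eq_mul, div_mul_cancel₀ _ (ne_of_gt h2pos)]
  have hf0 : f 0 = 0 := by simp [hfdef]
  rw [harg] at hkey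
  simp only [mul_zero, add_zero, sub_zero, sub_self, smul_zero, zero_add,
    smul_eq_mul] at hkey
  have hkey2 : f δ₁ ≤ δ₁/δ₂ * f δ₂ := by simpa [hfdef] using hkey
  have hmain : δ₂ * f δ₁ ≤ δ₁ * f δ₂ := by
    have := mul_le_mul_of_nonneg_left hkey2 (le_of_lt h2pos)
    calc δ₂ * f δ₁ ≤ δ₂ * (δ₁/δ₂ * f δ₂) := this
      _ = δ₁ * f δ₂ := by field_simp
  have hsecond : δ₂ * ν δ₁ ≤ δ₁ * ν δ₂ := by
    rw [hν1, hν2, ← mul_div_assoc, ← mul_div_assoc, div_le_div_iff₀ hlog2 hlog2]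
    nlinarith
  refine ⟨?_, hsecond⟩
  have hν1' : 0 ≤ ν δ₁ := by rw [hν1]; positivity
  have hν2' : 0 < ν δ₂ := by rw [hν2]; positivity
  rw [div_le_div_iff₀ (by linarith) (by linarith)]
  nlinarith
end
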